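/- arXiv:2011.07022 — 5 statements merged into one kernel-verified Lean document; each statement's English description precedes it below -/
import Mathlib

section
/- Let f : {0,1}^n → X be a function satisfying Simon's promise for a nonzero secret s ∈ {0,1}^n, i.e., for all x ≠ y, f(x) = f(y) if and only if x = y ⊕ s. Then any vector j ∈ {0,1}^n measured by Simon's routine (i.e., any j such that (-1)^{x·j} + (-1)^{(x⊕s)·j} ≠ 0 for some x) satisfies j · s = 0 (mod 2). -/
/-! The amplitudes of `x` and `x + s` interfere destructively unless `j · s = 0`: since
`(x + s) · j = x · j + j · s` and `(-1)^(a + 1) = -(-1)^a` over `ZMod 2`, the sum of the two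
signs vanishes whenever `j · s = 1`. -/

open Matrix

theorem ZMod.neg_one_pow_val_add_one (a : ZMod 2) :
    (-1 : ℤ) ^ (a + 1).val = -(-1 : ℤ) ^ a.val := by
  fin_cases a <;> decide

theorem ZMod.eq_zero_of_neg_one_pow_val_add_ne_zero {a b : ZMod 2}
    (h : (-1 : ℤ) ^ a.val + (-1 : ℤ) ^ (a + b).val ≠ 0) : b = 0 := by
  by_contra hb
  have hb1 : b = 1 := (by decide : ∀ c : ZMod 2, c ≠ 0 → c = 1) b hb
  rw [hb1, ZMod.neg_one_pow_val_add_one, add_neg_cancel] at h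
  exact h rfl

theorem simon_measured_vectors_orthogonal_general {n : ℕ}
    (s : Fin n → ZMod 2)
    (j : Fin n → ZMod 2)
    (hj : ∃ x : Fin n → ZMod 2,
      ((-1 : ℤ) ^ (∑ i, x i * j i).val + (-1 : ℤ) ^ (∑ i, (x i + s i) * j i).val) ≠ 0) :
    ∑ i, j i * s i = 0 := by
  obtain ⟨x, hx⟩ := hj
  have hshift : (x + s) ⬝ᵥ j = x ⬝ᵥ j + j ⬝ᵥ s := by
    rw [add_dotProduct, dotProduct_comm s]
  change (-1 : ℤ) ^ (x ⬝ᵥ j).val + (-1 : ℤ) ^ ((x + s) ⬝ᵥ j).val ≠ 0 at hx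
  rw [hshift] at hx
  exact ZMod.eq_zero_of_neg_one_pow_val_add_ne_zero hx

/-- Simon's routine can only produce vectors orthogonal to the secret:
if `f` satisfies Simon's promise for a nonzero `s` and
`(-1)^(x·j) + (-1)^((x+s)·j) ≠ 0` for some `x`, then `j · s = 0`. -/
theorem simon_measured_vectors_orthogonal {n : ℕ} {X : Type*}
    (f : (Fin n → ZMod 2) → X) (s : Fin n → ZMod 2) (hs : s ≠ 0)
    (hf : ∀ x y, x ≠ y → (f x = f y ↔ x = y + s))
    (j : Fin n → ZMod 2)
    (hj : ∃ x : Fin n → ZMod 2,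
      ((-1 : ℤ) ^ (∑ i, x i * j i).val + (-1 : ℤ) ^ (∑ i, (x i + s i) * j i).val) ≠ 0) :
    ∑ i, j i * s i = 0 :=
  simon_measured_vectors_orthogonal_general s j hj
end

section
/- In the truncated Even-Mansour attack: write K1 = (K1¹, K1²) with K1¹ ∈ (ZMod 2)^u and K1² ∈ (ZMod 2)^{n−u}. For y ∈ (ZMod 2)^{n−u}, define g_y(x) := E_{K1,K2}(x ∥ 0^{n−u}) ⊕ P(x ∥ y) for x ∈ (ZMod 2)^u. Then g_{K1²} has period K1¹, i.e., g_{K1²}(x ⊕ K1¹) = g_{K1²}(x) for all x ∈ (ZMod 2)^u. -/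
/- Whitening `(x, 0)` with `K1` gives `(x + K1.1, K1.2)`, so for `f x := P (x, K1.2)` we get
`g (x) = f (x + K1.1) + f x + K2`; since `k + k = 0` in characteristic two, `x ↦ f (x + k) + f x`
is `k`-periodic. -/

theorem periodic_add_comp_add_of_add_self_eq_zero {G H : Type*} [AddMonoid G] [AddCommMagma H]
    (f : G → H) {k : G} (hk : k + k = 0) :
    Function.Periodic (fun x => f (x + k) + f x) k := by
  intro x
  simp only [add_assoc, hk, add_zero, add_comm]

/-- Truncated Even-Mansour: with inputs split as pairs in `(ZMod 2)^u × (ZMod 2)^v`,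
`K1 = (K1¹, K1²)`, and `g_y(x) := E(x ∥ 0) ⊕ P(x ∥ y)`, the function `g_{K1²}`
has period `K1¹`. -/
theorem truncated_even_mansour_periodic {u v : ℕ}
    (P : (Fin u → ZMod 2) × (Fin v → ZMod 2) → (Fin u → ZMod 2) × (Fin v → ZMod 2))
    (K1 : (Fin u → ZMod 2) × (Fin v → ZMod 2))
    (K2 : (Fin u → ZMod 2) × (Fin v → ZMod 2))
    (E : (Fin u → ZMod 2) × (Fin v → ZMod 2) → (Fin u → ZMod 2) × (Fin v → ZMod 2))
    (hE : ∀ z, E z = P (z + K1) + K2) :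
    ∀ x : Fin u → ZMod 2,
      E (x + K1.1, 0) + P (x + K1.1, K1.2) = E (x, 0) + P (x, K1.2) := by
  have hg : ∀ x, E (x, 0) + P (x, K1.2) = P (x + K1.1, K1.2) + P (x, K1.2) + K2 := by
    intro x
    have hshift : ((x, 0) + K1 : (Fin u → ZMod 2) × (Fin v → ZMod 2)) = (x + K1.1, K1.2) :=
      Prod.ext rfl (zero_add _)
    rw [hE, hshift]
    abel
  intro x
  rw [hg, hg]
  exact congrArg (· + K2)
    (periodic_add_comp_add_of_add_self_eq_zero (fun y => P (y, K1.2)) (ZModModule.add_self K1.1) x)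
end

section
/- Correctness of the triangular basis algorithm: given input vectors x₁, …, x_m ∈ (ZMod 2)^n, Algorithm 1 (iterating i = 1..n outer, j = 1..m inner, with the used_j / av_i / b_i update rules) terminates with output data (av_i, b_i[(i+1)..n]) such that, defining β_i := 0^{i−1} ∥ (1 − av_i) ∥ b_i[(i+1)..n], the span of {β_1, …, β_n} equals the span of {x_1, …, x_m}. -/
/-- State of the triangular-basis algorithm (Algorithm 1). -/
structure AlgState (n m : ℕ) where
  x : Fin m → Fin n → ZMod 2
  used : Fin m → ZMod 2
  av : Fin n → ZMod 2
  b : Fin n → Fin n → ZMod 2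

/-- One iteration `(i, j)` of Algorithm 1:
`used_j += x_j[i] ∧ av_i`; `av_i += x_j[i] ∧ used_j`;
if `used_j` then `b_i[(i+1)..n] += x_j[(i+1)..n]`;
if `x_j[i]` then `x_j[(i+1)..n] += b_i[(i+1)..n]` (all mod 2). -/
def algStep {n m : ℕ} (i : Fin n) (j : Fin m) (s : AlgState n m) : AlgState n m :=
  let used' : ZMod 2 := s.used j + s.x j i * s.av i
  let av' : ZMod 2 := s.av i + s.x j i * used'
  let b' : Fin n → ZMod 2 := fun k => s.b i k + (if i < k then used' * s.x j k else 0)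
  let x' : Fin n → ZMod 2 := fun k => s.x j k + (if i < k then s.x j i * b' k else 0)
  { x := Function.update s.x j x'
    used := Function.update s.used j used'
    av := Function.update s.av i av'
    b := Function.update s.b i b' }

/-- Run a list of iterations in order. -/
def algRun {n m : ℕ} (L : List (Fin n × Fin m)) (s : AlgState n m) : AlgState n m :=
  L.foldl (fun s p => algStep p.1 p.2 s) s

/-- All iterations in the standard order: outer loop over `i`, inner loop over `j`. -/
def allIters (n m : ℕ) : List (Fin n × Fin m) :=
  (List.finRange n).flatMap fun i => (List.finRange m).map fun j => (i, j)

/-- Initial state: input vectors `x0`, `used = 0`, `av = 1`, `b = 0`. -/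
def initState {n m : ℕ} (x0 : Fin m → Fin n → ZMod 2) : AlgState n m :=
  { x := x0, used := fun _ => 0, av := fun _ => 1, b := fun _ _ => 0 }

/-- The triangular basis vectors `β_i = 0^{i-1} ∥ (1 - av_i) ∥ b_i[(i+1)..n]`. -/
def basisVec {n m : ℕ} (s : AlgState n m) : Fin n → Fin n → ZMod 2 :=
  fun i k => if k < i then 0 else if k = i then 1 - s.av i else s.b i k

/-!
The algorithm never clears coordinate `i` of `x_j` once row `i` has dealt with it, so only the
*residual* of `x_j` is meaningful: its coordinates from a cut `c j` on, where `c j = i + 1` if `j`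
has been visited in row `i` and `c j = i` otherwise. The loop invariant: the `β_p` together with
the residuals span the input; a used `x_j` has residual `0`; and `b_p = 0` while `av_p = 1`, so
that `β_p = 0` until row `p` has found its pivot. An iteration with `x_j[i] = 1` either adds `β_i`
to the residual of `x_j` (row `i` already has a pivot) or moves that residual into the slot
`β_i = 0`, leaving `0` behind; both keep the span. After the last row every residual is empty.
-/

section

variable {n m : ℕ}

lemma zmod2_eq_zero_or_one : ∀ a : ZMod 2, a = 0 ∨ a = 1 := by decide

lemma span_range_sum_elim_zero_left {R M ι κ : Type*} [Semiring R] [AddCommMonoid M]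
    [Module R M] (g : κ → M) :
    Submodule.span R (Set.range (Sum.elim (0 : ι → M) g)) = Submodule.span R (Set.range g) := by
  rw [Set.Sum.elim_range, Submodule.span_union, sup_eq_right]
  exact Submodule.span_le.2 (Set.range_subset_iff.2 fun _ => Submodule.zero_mem _)

lemma span_range_sum_elim_zero_right {R M ι κ : Type*} [Semiring R] [AddCommMonoid M]
    [Module R M] (f : ι → M) :
    Submodule.span R (Set.range (Sum.elim f (0 : κ → M))) = Submodule.span R (Set.range f) := by
  rw [Set.Sum.elim_range, Submodule.span_union, sup_eq_left]
  exact Submodule.span_le.2 (Set.range_subset_iff.2 fun _ => Submodule.zero_mem _)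

lemma algRun_nil (s : AlgState n m) : algRun [] s = s := rfl

lemma algRun_cons (p : Fin n × Fin m) (L : List (Fin n × Fin m)) (s : AlgState n m) :
    algRun (p :: L) s = algRun L (algStep p.1 p.2 s) := rfl

lemma algRun_append (L₁ L₂ : List (Fin n × Fin m)) (s : AlgState n m) :
    algRun (L₁ ++ L₂) s = algRun L₂ (algRun L₁ s) :=
  List.foldl_append

lemma basisVec_eq_zero {s : AlgState n m} {i : Fin n} (ha : s.av i = 1) (hb : s.b i = 0) :
    basisVec s i = 0 := by
  funext k
  simp only [basisVec, ha, hb, sub_self, Pi.zero_apply, ite_self]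

def AlgState.residual (s : AlgState n m) (c : Fin m → ℕ) : Fin m → Fin n → ZMod 2 :=
  fun j k => if (k : ℕ) < c j then 0 else s.x j k

def AlgState.generators (s : AlgState n m) (c : Fin m → ℕ) :
    Fin n ⊕ Fin m → Fin n → ZMod 2 :=
  Sum.elim (basisVec s) (s.residual c)

lemma residual_eq_zero_of_le {s : AlgState n m} {c : Fin m → ℕ} (hc : ∀ j, n ≤ c j) :
    s.residual c = 0 := by
  funext j k
  simp [AlgState.residual, k.2.trans_le (hc j)]

section Step

variable {i : Fin n} {j : Fin m} {s : AlgState n m}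

lemma algStep_eq_self (hx : s.x j i = 0) (htail : ∀ k, i < k → s.used j * s.x j k = 0) :
    algStep i j s = s := by
  obtain ⟨x, used, av, b⟩ := s
  dsimp only at *
  simp only [algStep, hx, zero_mul, add_zero, ite_self, AlgState.mk.injEq,
    Function.update_eq_self_iff, true_and]
  funext k
  split_ifs with hk
  · rw [htail k hk, add_zero]
  · rw [add_zero]

lemma algStep_of_reduce (hx : s.x j i = 1) (hu : s.used j = 0) (ha : s.av i = 0) :
    algStep i j s =
      { s with x := Function.update s.x j fun k => s.x j k + if i < k then s.b i k else 0 } := by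
  obtain ⟨x, used, av, b⟩ := s
  dsimp only at *
  simp only [algStep, hx, hu, ha, zero_mul, mul_zero, add_zero, one_mul, AlgState.mk.injEq,
    Function.update_eq_self_iff, ite_self, true_and]

lemma algStep_of_pivot (hx : s.x j i = 1) (hu : s.used j = 0) (ha : s.av i = 1)
    (hb : s.b i = 0) :
    algStep i j s =
      { x := Function.update s.x j fun k => if i < k then 0 else s.x j k
        used := Function.update s.used j 1
        av := Function.update s.av i 0
        b := Function.update s.b i fun k => if i < k then s.x j k else 0 } := by
  obtain ⟨x, used, av, b⟩ := s
  dsimp only at *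
  simp only [algStep, hx, hu, ha, hb, Pi.zero_apply, zero_add, one_mul, AlgState.mk.injEq]
  refine ⟨?_, trivial, by rw [CharTwo.add_self_eq_zero], trivial⟩
  congr 1
  funext k
  split_ifs <;> simp [CharTwo.add_self_eq_zero]

end Step

section Generators

variable {i : Fin n} {j : Fin m} {s : AlgState n m} {c : Fin m → ℕ}

lemma residual_update_of_x_eq_zero (hc : c j = i) (hx : s.x j i = 0) :
    s.residual (Function.update c j (i + 1)) = s.residual c := by
  funext j' k
  by_cases hj : j' = j
  · subst hj
    simp only [AlgState.residual, Function.update_self, hc]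
    split_ifs <;> first | rfl | omega | rw [← hx, Fin.ext (by omega : (k : ℕ) = i)]
  · simp only [AlgState.residual, Function.update_of_ne hj]

lemma generators_algStep_of_reduce (hc : c j = i) (hx : s.x j i = 1) (hu : s.used j = 0)
    (ha : s.av i = 0) :
    (algStep i j s).generators (Function.update c j (i + 1)) =
      Function.update (s.generators c) (.inr j)
        (s.generators c (.inr j) + (1 : ZMod 2) • s.generators c (.inl i)) := by
  rw [algStep_of_reduce hx hu ha, one_smul]
  funext p k
  rcases p with p | j'
  · rfl
  by_cases hj : j' = j
  · subst hj
    simp only [AlgState.generators, AlgState.residual, basisVec, Function.update_self,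
      Sum.elim_inr, Sum.elim_inl, Pi.add_apply, hc, ha]
    rcases lt_trichotomy k i with hk | rfl | hk
    · have : (k : ℕ) < i := hk
      simp [hk, this, Nat.lt_succ_of_lt this]
    · simp [hx, CharTwo.add_self_eq_zero]
    · have : (i : ℕ) < k := hk
      simp [hk, hk.not_gt, hk.ne', this.not_gt, Nat.not_lt.2 (Nat.succ_le_of_lt this)]
  · simp only [AlgState.generators, AlgState.residual, Function.update_of_ne hj,
      Function.update_of_ne (Sum.inr_injective.ne hj), Sum.elim_inr]

lemma generators_algStep_of_pivot (hc : c j = i) (hx : s.x j i = 1) (hu : s.used j = 0)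
    (ha : s.av i = 1) (hb : s.b i = 0) :
    (algStep i j s).generators (Function.update c j (i + 1)) =
      s.generators c ∘ Equiv.swap (.inl i) (.inr j) := by
  rw [algStep_of_pivot hx hu ha hb]
  funext p k
  rcases p with p | j'
  · by_cases hp : p = i
    · subst hp
      simp only [AlgState.generators, AlgState.residual, basisVec, Function.comp_apply,
        Equiv.swap_apply_left, Function.update_self, Sum.elim_inl, Sum.elim_inr, hc]
      rcases lt_trichotomy k p with hk | rfl | hk
      · simp [hk, show (k : ℕ) < p from hk]
      · simp [hx]
      · have : (p : ℕ) < k := hk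
        simp [hk, hk.not_gt, hk.ne', this.not_gt]
    · simp only [AlgState.generators, basisVec, Function.comp_apply, Sum.elim_inl,
        Equiv.swap_apply_of_ne_of_ne (Sum.inl_injective.ne hp) Sum.inl_ne_inr,
        Function.update_of_ne hp]
  · by_cases hj : j' = j
    · subst hj
      simp only [AlgState.generators, AlgState.residual, basisVec, Function.comp_apply,
        Equiv.swap_apply_right, Function.update_self, Sum.elim_inl, Sum.elim_inr, hb, ha]
      split_ifs <;> first | rfl | omega
    · simp only [AlgState.generators, AlgState.residual, Function.comp_apply, Sum.elim_inr,
        Equiv.swap_apply_of_ne_of_ne Sum.inr_ne_inl (Sum.inr_injective.ne hj),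
        Function.update_of_ne hj]

end Generators

structure AlgInv (x0 : Fin m → Fin n → ZMod 2) (c : Fin m → ℕ) (s : AlgState n m) :
    Prop where
  b_eq_zero : ∀ p, s.av p = 1 → s.b p = 0
  residual_eq_zero : ∀ j, s.used j = 1 → s.residual c j = 0
  span_eq : Submodule.span (ZMod 2) (Set.range (s.generators c)) =
    Submodule.span (ZMod 2) (Set.range x0)

namespace AlgInv

variable {x0 : Fin m → Fin n → ZMod 2} {c : Fin m → ℕ} {s : AlgState n m} {i : Fin n}
  {j : Fin m}

lemma x_eq_zero_of_used (h : AlgInv x0 c s) (hu : s.used j = 1) {k : Fin n} (hk : c j ≤ k) :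
    s.x j k = 0 := by
  simpa [AlgState.residual, hk.not_gt] using congrFun (h.residual_eq_zero j hu) k

lemma algStep_of_x_eq_zero (h : AlgInv x0 c s) (hc : c j = i) (hx : s.x j i = 0) :
    AlgInv x0 (Function.update c j (i + 1)) (algStep i j s) := by
  have htail : ∀ k, i < k → s.used j * s.x j k = 0 := by
    intro k hk
    rcases zmod2_eq_zero_or_one (s.used j) with hu | hu
    · rw [hu, zero_mul]
    · rw [h.x_eq_zero_of_used hu (hc ▸ hk.le), mul_zero]
  have hres := residual_update_of_x_eq_zero hc hx
  rw [algStep_eq_self hx htail]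
  refine ⟨h.b_eq_zero, fun j' hu => hres ▸ h.residual_eq_zero j' hu, ?_⟩
  rw [AlgState.generators, hres]
  exact h.span_eq

lemma algStep_of_reduce (h : AlgInv x0 c s) (hc : c j = i) (hx : s.x j i = 1)
    (hu : s.used j = 0) (ha : s.av i = 0) :
    AlgInv x0 (Function.update c j (i + 1)) (algStep i j s) := by
  have hg := generators_algStep_of_reduce hc hx hu ha
  refine ⟨?_, fun j' hu' => ?_, ?_⟩
  · rw [_root_.algStep_of_reduce hx hu ha]
    exact h.b_eq_zero
  · rw [_root_.algStep_of_reduce hx hu ha] at hu'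
    have hj : j' ≠ j := by rintro rfl; simp [hu] at hu'
    change (algStep i j s).generators _ (.inr j') = 0
    rw [hg, Function.update_of_ne (Sum.inr_injective.ne hj)]
    exact h.residual_eq_zero j' hu'
  · rw [hg, Submodule.span_range_update_add_smul Sum.inl_ne_inr]
    exact h.span_eq

lemma algStep_of_pivot (h : AlgInv x0 c s) (hc : c j = i) (hx : s.x j i = 1)
    (hu : s.used j = 0) (ha : s.av i = 1) :
    AlgInv x0 (Function.update c j (i + 1)) (algStep i j s) := by
  have hb := h.b_eq_zero i ha
  have hg := generators_algStep_of_pivot hc hx hu ha hb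
  have hs := _root_.algStep_of_pivot hx hu ha hb
  refine ⟨fun p ha' => ?_, fun j' hu' => ?_, ?_⟩
  · by_cases hp : p = i
    · subst hp
      simp [hs] at ha'
    · simp only [hs, Function.update_of_ne hp] at ha' ⊢
      exact h.b_eq_zero p ha'
  · change (algStep i j s).generators _ (.inr j') = 0
    rw [hg]
    by_cases hj : j' = j
    · subst hj
      rw [Function.comp_apply, Equiv.swap_apply_right]
      exact basisVec_eq_zero ha hb
    · simp only [hs, Function.update_of_ne hj] at hu'
      rw [Function.comp_apply,
        Equiv.swap_apply_of_ne_of_ne Sum.inr_ne_inl (Sum.inr_injective.ne hj)]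
      exact h.residual_eq_zero j' hu'
  · rw [hg, EquivLike.range_comp]
    exact h.span_eq

lemma algStep (h : AlgInv x0 c s) (hc : c j = i) :
    AlgInv x0 (Function.update c j (i + 1)) (algStep i j s) := by
  rcases zmod2_eq_zero_or_one (s.x j i) with hx | hx
  · exact h.algStep_of_x_eq_zero hc hx
  have hu : s.used j = 0 := by
    rcases zmod2_eq_zero_or_one (s.used j) with hu | hu
    · exact hu
    · simpa [hx] using h.x_eq_zero_of_used hu hc.le
  rcases zmod2_eq_zero_or_one (s.av i) with ha | ha
  · exact h.algStep_of_reduce hc hx hu ha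
  · exact h.algStep_of_pivot hc hx hu ha

lemma init (x0 : Fin m → Fin n → ZMod 2) : AlgInv x0 (fun _ => 0) (initState x0) where
  b_eq_zero _ _ := rfl
  residual_eq_zero _ hu := absurd hu zero_ne_one
  span_eq := by
    have hβ : basisVec (initState x0) = 0 := funext fun _ => basisVec_eq_zero rfl rfl
    have hres : (initState x0).residual (fun _ => 0) = x0 := by
      funext j k
      simp [AlgState.residual, initState]
    rw [AlgState.generators, hβ, hres, span_range_sum_elim_zero_left]

lemma algRun_row (h : AlgInv x0 c s) {l : List (Fin m)} (hl : l.Nodup)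
    (hc : ∀ j ∈ l, c j = i) :
    AlgInv x0 (fun j => if j ∈ l then i + 1 else c j) (algRun (l.map fun j => (i, j)) s) := by
  induction l generalizing c s with
  | nil => simpa [algRun_nil] using h
  | cons a l ih =>
    rw [List.nodup_cons] at hl
    have hc' : ∀ j ∈ l, Function.update c a (i + 1) j = i := fun j hj => by
      rw [Function.update_of_ne (ne_of_mem_of_not_mem hj hl.1)]
      exact hc j (List.mem_cons_of_mem a hj)
    have hcut : (fun j => if j ∈ l then (i : ℕ) + 1 else Function.update c a (i + 1) j) =
        fun j => if j ∈ a :: l then (i : ℕ) + 1 else c j := by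
      funext j
      by_cases hj : j = a <;> simp [hj]
    rw [List.map_cons, algRun_cons, ← hcut]
    exact ih (h.algStep (hc a List.mem_cons_self)) hl.2 hc'

lemma algRun_rows {k : ℕ} (h : AlgInv x0 (fun _ => k) s) {l : List (Fin n)}
    (hl : l.map Fin.val = List.range' k l.length) :
    AlgInv x0 (fun _ => k + l.length)
      (algRun (l.flatMap fun i => (List.finRange m).map fun j => (i, j)) s) := by
  induction l generalizing k s with
  | nil => simpa [algRun_nil] using h
  | cons a l ih =>
    rw [List.map_cons, List.length_cons, List.range'_succ, List.cons.injEq] at hl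
    have hrow := h.algRun_row (List.nodup_finRange m) fun _ _ => hl.1.symm
    simp only [List.mem_finRange, if_true, hl.1] at hrow
    rw [List.flatMap_cons, algRun_append, List.length_cons,
      show k + (l.length + 1) = k + 1 + l.length by omega]
    exact ih hrow hl.2

end AlgInv

end

/-- Correctness of Algorithm 1: the span of the output triangular basis `β`
equals the span of the input vectors. -/
theorem alg1_correct {n m : ℕ} (x0 : Fin m → Fin n → ZMod 2) :
    Submodule.span (ZMod 2) (Set.range (basisVec (algRun (allIters n m) (initState x0)))) =
      Submodule.span (ZMod 2) (Set.range x0) := by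
  have h := (AlgInv.init x0).algRun_rows (l := List.finRange n)
    (by rw [List.map_coe_finRange_eq_range, List.range_eq_range', List.length_finRange])
  rw [← h.span_eq, AlgState.generators, residual_eq_zero_of_le (by simp),
    span_range_sum_elim_zero_right, allIters]
end

section
/- Invariant of the triangular basis algorithm: at the beginning of iteration (i,j) of Algorithm 1, if av_i = 1 then b_i[(i+1)..n] = 0, and if used_j = 1 then x_j[i..n] = 0. -/
/-!
Both halves of the invariant are proved together, for any list of iterations that respects the
partial order. Within column `j` the rows are processed in increasing order, and the invariant
says that once `used_j = 1` the vector `x_j` vanishes at every row beyond those already processed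
in column `j`. In iteration `(i, j)` the only delicate case is `used_j = 0`, `x_j[i] = 1`,
`av_i = 1`: then `b_i` becomes `x_j` past position `i`, and adding it back clears `x_j`, while
`av_i` flips to `0`. Otherwise `used_j = 1` already forces `x_j[i] = 0` and the step changes
nothing relevant.
-/

namespace AlgState

variable {n m : ℕ}

/-- `S` is the list of iterations already executed. -/
def Invariant (S : List (Fin n × Fin m)) (s : AlgState n m) : Prop :=
  (∀ i k, s.av i = 1 → i < k → s.b i k = 0) ∧
  (∀ j k, s.used j = 1 → (∀ p ∈ S, p.2 = j → p.1 < k) → s.x j k = 0)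

theorem invariant_initState (x0 : Fin m → Fin n → ZMod 2) : (initState x0).Invariant [] :=
  ⟨fun _ _ _ _ => rfl, fun _ _ h => absurd h (by simp [initState])⟩

set_option synthInstance.maxSize 2000 in
/-- The new bit `b_i[k]` in iteration `(i, j)`, for `i < k`, with `u = used_j`, `a = av_i`. -/
theorem algStep_b_bit (u a xi xk bk : ZMod 2) (hav : a + xi * (u + xi * a) = 1)
    (hb : a = 1 → bk = 0) (hxi : u = 1 → xi = 0) (hxk : u = 1 → xk = 0) :
    bk + (u + xi * a) * xk = 0 := by
  revert u a xi xk bk; decide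

set_option synthInstance.maxSize 2000 in
/-- The new bit `x_j[k]` in iteration `(i, j)`, for `i < k`, with `u = used_j`, `a = av_i`. -/
theorem algStep_x_bit (u a xi xk bk : ZMod 2) (hused : u + xi * a = 1)
    (hb : a = 1 → bk = 0) (hxi : u = 1 → xi = 0) (hxk : u = 1 → xk = 0) :
    xk + xi * (bk + (u + xi * a) * xk) = 0 := by
  revert u a xi xk bk; decide

theorem Invariant.algStep {S : List (Fin n × Fin m)} {s : AlgState n m} {i : Fin n} {j : Fin m}
    (hinv : s.Invariant S) (hrows : ∀ k, (k, j) ∈ S → k < i) :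
    (algStep i j s).Invariant (S ++ [(i, j)]) := by
  obtain ⟨hb, hx⟩ := hinv
  have hxj : s.used j = 1 → ∀ k, i ≤ k → s.x j k = 0 := fun hu k hik =>
    hx j k hu fun p hp hpj => (hrows p.1 (hpj ▸ hp)).trans_le hik
  constructor
  · intro i' k hav hik
    rcases eq_or_ne i' i with rfl | hi
    · simp only [_root_.algStep, Function.update_self, if_pos hik] at hav ⊢
      exact algStep_b_bit _ _ _ _ _ hav (hb i' k · hik) (hxj · i' le_rfl) (hxj · k hik.le)
    · simp only [_root_.algStep, Function.update_of_ne hi] at hav ⊢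
      exact hb i' k hav hik
  · intro j' k hused hlt
    have hS : ∀ p ∈ S, p.2 = j' → p.1 < k := fun p hp => hlt p (List.mem_append_left _ hp)
    rcases eq_or_ne j' j with rfl | hj
    · have hik : i < k := hlt (i, j') (by simp) rfl
      simp only [_root_.algStep, Function.update_self, if_pos hik] at hused ⊢
      exact algStep_x_bit _ _ _ _ _ hused (hb i k · hik) (hxj · i le_rfl) (hx j' k · hS)
    · simp only [_root_.algStep, Function.update_of_ne hj] at hused ⊢
      exact hx j' k hused hS

theorem Invariant.algRun {s : AlgState n m} (hs : s.Invariant []) {L : List (Fin n × Fin m)}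
    (hL : L.Pairwise fun p q => ¬q ≤ p) : (_root_.algRun L s).Invariant L := by
  induction L using List.reverseRecOn with
  | nil => exact hs
  | append_singleton L p ih =>
    rw [List.pairwise_append] at hL
    obtain ⟨hL, -, hp⟩ := hL
    rw [_root_.algRun, List.foldl_append, List.foldl_cons, List.foldl_nil]
    refine (ih hL).algStep fun k hk => ?_
    have := hp _ hk p (List.mem_singleton_self p)
    exact lt_of_not_ge fun h => this ⟨h, le_rfl⟩

end AlgState

theorem alg1_invariant_general {n m : ℕ} (x0 : Fin m → Fin n → ZMod 2)
    (i : Fin n) (j : Fin m) (L : List (Fin n × Fin m))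
    (horder : L.Pairwise fun p q => ¬(q.1 ≤ p.1 ∧ q.2 ≤ p.2))
    (hdown : ∀ p ∈ L, ∀ q : Fin n × Fin m, q.1 ≤ p.1 → q.2 ≤ p.2 → q ≠ p → q ∈ L)
    (hnotyet : (i, j) ∉ L) :
    (let s := algRun L (initState x0)
     ((s.av i = 1 → ∀ k, i < k → s.b i k = 0) ∧
      (s.used j = 1 → ∀ k, i ≤ k → s.x j k = 0))) := by
  have hinv := (AlgState.invariant_initState x0).algRun horder
  refine ⟨fun hav k hik => hinv.1 i k hav hik, fun hused k hik => hinv.2 j k hused ?_⟩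
  rintro ⟨i', j'⟩ hp rfl
  by_contra! hki
  rcases eq_or_ne (i, j') (i', j') with he | hne
  · exact hnotyet (he ▸ hp)
  · exact hnotyet (hdown _ hp (i, j') (hik.trans hki) le_rfl hne)

/-- Invariant of Algorithm 1: at the beginning of iteration `(i, j)` of any
order-respecting schedule (here: after executing a down-closed, order-respecting
list `L` of iterations containing every predecessor of `(i, j)` but not `(i, j)`),
if `av_i = 1` then `b_i[(i+1)..n] = 0`, and if `used_j = 1` then `x_j[i..n] = 0`. -/
theorem alg1_invariant {n m : ℕ} (x0 : Fin m → Fin n → ZMod 2)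
    (i : Fin n) (j : Fin m) (L : List (Fin n × Fin m)) (hnd : L.Nodup)
    (horder : L.Pairwise fun p q => ¬(q.1 ≤ p.1 ∧ q.2 ≤ p.2))
    (hdown : ∀ p ∈ L, ∀ q : Fin n × Fin m, q.1 ≤ p.1 → q.2 ≤ p.2 → q ≠ p → q ∈ L)
    (hnotyet : (i, j) ∉ L)
    (hpred : ∀ q : Fin n × Fin m, q.1 ≤ i → q.2 ≤ j → q ≠ (i, j) → q ∈ L) :
    (let s := algRun L (initState x0)
     ((s.av i = 1 → ∀ k, i < k → s.b i k = 0) ∧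
      (s.used j = 1 → ∀ k, i ≤ k → s.x j k = 0))) :=
  alg1_invariant_general x0 i j L horder hdown hnotyet
end

section
/- Order-independence of Algorithm 1: any two execution schedules of the iterations (i,j) of Algorithm 1 that both respect the partial order (i,j) < (k,l) ⟺ (i ≤ k ∧ j ≤ l ∧ (i,j) ≠ (k,l)) produce the same final state (same x_j, used_j, av_i, b_i). In particular, iterations (i,j) with i + j constant may be executed in parallel. -/
theorem algStep_comm {n m : ℕ} {i i' : Fin n} {j j' : Fin m} (hi : i ≠ i') (hj : j ≠ j')
    (s : AlgState n m) : algStep i j (algStep i' j' s) = algStep i' j' (algStep i j s) := by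
  simp only [algStep, Function.update_of_ne hi, Function.update_of_ne hi.symm,
    Function.update_of_ne hj, Function.update_of_ne hj.symm]
  congr 1
  exacts [Function.update_comm hj.symm _ _ _, Function.update_comm hj.symm _ _ _,
    Function.update_comm hi.symm _ _ _, Function.update_comm hi.symm _ _ _]

theorem Prod.fst_ne_and_snd_ne_of_incomparable {α β : Type*} [LinearOrder α] [LinearOrder β]
    {p q : α × β} (hne : p ≠ q) (hpq : ¬(q.1 ≤ p.1 ∧ q.2 ≤ p.2 ∧ q ≠ p))
    (hqp : ¬(p.1 ≤ q.1 ∧ p.2 ≤ q.2 ∧ p ≠ q)) : p.1 ≠ q.1 ∧ p.2 ≠ q.2 := by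
  refine ⟨fun h => ?_, fun h => ?_⟩
  · rcases le_total p.2 q.2 with h2 | h2
    · exact hqp ⟨h.le, h2, hne⟩
    · exact hpq ⟨h.ge, h2, hne.symm⟩
  · rcases le_total p.1 q.1 with h1 | h1
    · exact hqp ⟨h1, h.le, hne⟩
    · exact hpq ⟨h1, h.ge, hne.symm⟩

namespace List

variable {α β : Type*} {f : β → α → β}

theorem foldl_append_cons_of_forall_comm {a : α} {u : List α}
    (h : ∀ b ∈ u, ∀ s, f (f s b) a = f (f s a) b) (v : List α) (s : β) :
    (u ++ a :: v).foldl f s = (u ++ v).foldl f (f s a) := by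
  induction u generalizing s with
  | nil => rfl
  | cons c u ih =>
    rw [cons_append, foldl_cons, ih (fun b hb => h b (mem_cons_of_mem _ hb)),
      h c mem_cons_self, cons_append, foldl_cons]

theorem Perm.foldl_eq_of_pairwise {P : α → α → Prop}
    (hc : ∀ a b, a ≠ b → P a b → P b a → ∀ s, f (f s a) b = f (f s b) a)
    {l₁ l₂ : List α} (hp : l₁ ~ l₂) (h₁ : l₁.Pairwise P) (h₂ : l₂.Pairwise P) (s : β) :
    l₁.foldl f s = l₂.foldl f s := by
  induction l₁ generalizing l₂ s with
  | nil => rw [hp.nil_eq]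
  | cons a t ih =>
    obtain ⟨u, v, rfl⟩ := append_of_mem (hp.subset mem_cons_self)
    have hmove : ∀ b ∈ u, ∀ s', f (f s' b) a = f (f s' a) b := by
      intro b hb s'
      rcases eq_or_ne b a with rfl | hne
      · rfl
      have hbt : b ∈ t :=
        (mem_cons.mp (hp.symm.subset (mem_append_left _ hb))).resolve_left hne
      exact (hc a b hne.symm ((pairwise_cons.mp h₁).1 b hbt)
        ((pairwise_append.mp h₂).2.2 b hb a mem_cons_self) s').symm
    rw [foldl_append_cons_of_forall_comm hmove, foldl_cons]
    exact ih (perm_middle.symm.trans hp.symm).cons_inv.symm (pairwise_cons.mp h₁).2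
      (h₂.sublist ((v.sublist_cons_self a).append_left u)) _

end List

/-- Order-independence of Algorithm 1: any two schedules of all iterations `(i, j)`
that respect the partial order `(i,j) < (k,l) ⟺ i ≤ k ∧ j ≤ l ∧ (i,j) ≠ (k,l)`
produce the same final state. -/
theorem alg1_order_independent {n m : ℕ}
    (L1 L2 : List (Fin n × Fin m))
    (h1 : L1.Perm (allIters n m)) (h2 : L2.Perm (allIters n m))
    (ho1 : L1.Pairwise fun p q => ¬(q.1 ≤ p.1 ∧ q.2 ≤ p.2 ∧ q ≠ p))
    (ho2 : L2.Pairwise fun p q => ¬(q.1 ≤ p.1 ∧ q.2 ≤ p.2 ∧ q ≠ p)) :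
    ∀ s0 : AlgState n m, algRun L1 s0 = algRun L2 s0 := by
  refine (h1.trans h2.symm).foldl_eq_of_pairwise (fun p q hne hpq hqp s => ?_) ho1 ho2
  obtain ⟨hi, hj⟩ := Prod.fst_ne_and_snd_ne_of_incomparable hne hpq hqp
  exact algStep_comm hi.symm hj.symm s
end
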